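/- arXiv:2110.03273 — 2 statements merged into one kernel-verified Lean document; each statement's English description precedes it below -/
import Mathlib

section
/- The gradient flow solution converges to the minimum-norm least-squares solution: as t → ∞, β̂_gf(t) = (XᵀX)⁺(I − exp(−tXᵀX/n))XᵀY converges to (XᵀX)⁺XᵀY. -/
/-!
Since `XᵀX (XᵀX)⁺ Xᵀ = Xᵀ`, the vector `XᵀY` lies in the range of `A = XᵀX`, so the error
`(XᵀX)⁺ exp(−tA/n) XᵀY` equals `(XᵀX)⁺ exp(−tA/n) A (XᵀX)⁺XᵀY`. By the functional calculus,
`exp(−sA) A = f_s(A)` with `f_s(x) = x e^{−sx}`, and `0 ≤ f_s ≤ 1/s` on the spectrum `⊆ [0, ∞)`.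
-/

open Matrix Filter

/-- `P` is the Moore–Penrose pseudoinverse of `A`. -/
def IsMoorePenroseInv {d : ℕ} (A P : Matrix (Fin d) (Fin d) ℝ) : Prop :=
  A * P * A = A ∧ P * A * P = P ∧ (A * P)ᵀ = A * P ∧ (P * A)ᵀ = P * A

open Topology

theorem Real.exp_neg_mul_mul_le_inv {s x : ℝ} (hs : 0 < s) :
    Real.exp (-s * x) * x ≤ s⁻¹ := by
  have h := Real.add_one_le_exp (s * x)
  rw [neg_mul, Real.exp_neg, inv_mul_eq_div, div_le_iff₀ (Real.exp_pos _), inv_mul_eq_div,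
    le_div_iff₀ hs]
  linarith

theorem tendstoUniformlyOn_exp_neg_mul_mul_Ici :
    TendstoUniformlyOn (fun s x : ℝ => Real.exp (-s * x) * x) 0 atTop (Set.Ici 0) := by
  rw [Metric.tendstoUniformlyOn_iff]
  intro ε hε
  filter_upwards [eventually_gt_atTop ε⁻¹] with s hs x (hx : 0 ≤ x)
  have hs0 : 0 < s := (inv_pos.2 hε).trans hs
  rw [Pi.zero_apply, dist_zero_left, Real.norm_of_nonneg (by positivity)]
  exact (Real.exp_neg_mul_mul_le_inv hs0).trans_lt ((inv_lt_comm₀ hε hs0).1 hs)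

theorem tendsto_exp_neg_smul_mul_atTop {A : Type*} [NormedRing A] [StarRing A]
    [NormedAlgebra ℝ A] [PartialOrder A] [StarOrderedRing A] [StarModule ℝ A]
    [ContinuousFunctionalCalculus ℝ A IsSelfAdjoint] [NonnegSpectrumClass ℝ A]
    {a : A} (ha : 0 ≤ a) :
    Tendsto (fun s : ℝ => NormedSpace.exp (-s • a) * a) atTop (𝓝 0) := by
  have hsa : IsSelfAdjoint a := ha.isSelfAdjoint
  have hcfc (s : ℝ) :
      NormedSpace.exp (-s • a) * a = cfc (fun x => Real.exp (-s * x) * x) a := by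
    rw [cfc_mul _ _ a, cfc_id' ℝ a,
      ← CFC.real_exp_eq_normedSpace_exp ((IsSelfAdjoint.all (-s)).smul hsa)]
    exact congrArg (· * a) (cfc_comp_smul (-s) Real.exp a).symm
  simp_rw [hcfc]
  rw [← cfc_zero ℝ a]
  refine tendsto_cfc_fun (tendstoUniformlyOn_exp_neg_mul_mul_Ici.mono ?_) (.of_forall fun s => ?_)
  · exact fun x hx => spectrum_nonneg_of_nonneg ha hx
  · fun_prop

open scoped MatrixOrder in
theorem Matrix.PosSemidef.tendsto_exp_neg_smul_mul_atTop {n : Type*} [Fintype n] [DecidableEq n]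
    {A : Matrix n n ℝ} (hA : A.PosSemidef) :
    Tendsto (fun s : ℝ => NormedSpace.exp (-s • A) * A) atTop (𝓝 0) :=
  -- The L2 operator norm induces the product topology, so neither side depends on this choice.
  let _ := Matrix.instL2OpNormedRing (𝕜 := ℝ) (n := n)
  let _ := Matrix.instL2OpNormedAlgebra (𝕜 := ℝ) (n := n)
  _root_.tendsto_exp_neg_smul_mul_atTop (Matrix.nonneg_iff_posSemidef.2 hA)

theorem Matrix.gram_mul_mul_conjTranspose_eq {m n R : Type*} [Fintype m] [Fintype n] [Ring R]
    [PartialOrder R] [StarRing R] [StarOrderedRing R] [NoZeroDivisors R]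
    {X : Matrix m n R} {P : Matrix n n R} (h₁ : Xᴴ * X * P * (Xᴴ * X) = Xᴴ * X)
    (h₃ : (Xᴴ * X * P)ᴴ = Xᴴ * X * P) :
    Xᴴ * X * P * Xᴴ = Xᴴ := by
  set A := Xᴴ * X
  have hZX : (X * (A * P) - X)ᴴ * X = 0 := by
    rw [conjTranspose_sub, conjTranspose_mul, h₃, Matrix.sub_mul, Matrix.mul_assoc, h₁,
      sub_self]
  have hZ : (X * (A * P) - X)ᴴ * (X * (A * P) - X) = 0 := by
    rw [Matrix.mul_sub, ← Matrix.mul_assoc, hZX, Matrix.zero_mul, sub_zero]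
  have hX : X * (A * P) = X := sub_eq_zero.1 (conjTranspose_mul_self_eq_zero.1 hZ)
  simpa only [conjTranspose_mul, h₃] using congrArg conjTranspose hX

theorem IsMoorePenroseInv.gram_mul_mul_transpose_eq {m d : ℕ} {X : Matrix (Fin m) (Fin d) ℝ}
    {P : Matrix (Fin d) (Fin d) ℝ} (hP : IsMoorePenroseInv (Xᵀ * X) P) :
    Xᵀ * X * P * Xᵀ = Xᵀ := by
  simp only [← conjTranspose_eq_transpose_of_trivial] at hP ⊢
  exact gram_mul_mul_conjTranspose_eq hP.1 hP.2.2.1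

theorem Matrix.tendsto_mul_one_sub_mulVec {ι n R : Type*} [Fintype n] [DecidableEq n] [Ring R]
    [TopologicalSpace R] [IsTopologicalRing R] {l : Filter ι} {E : ι → Matrix n n R}
    {A : Matrix n n R} (hE : Tendsto (fun t => E t * A) l (𝓝 0)) (P : Matrix n n R)
    (v : n → R) :
    Tendsto (fun t => (P * (1 - E t)) *ᵥ (A *ᵥ v)) l (𝓝 (P *ᵥ (A *ᵥ v))) := by
  have hcont : Continuous fun M : Matrix n n R => P *ᵥ (A *ᵥ v) - P *ᵥ (M *ᵥ v) := by
    fun_prop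
  have := (hcont.tendsto 0).comp hE
  simp only [Function.comp_def, zero_mulVec, mulVec_zero, sub_zero] at this
  refine this.congr fun t => ?_
  rw [Matrix.mul_sub, Matrix.mul_one, sub_mulVec, mulVec_mulVec, mulVec_mulVec, mulVec_mulVec,
    Matrix.mul_assoc]

/-- as `t → ∞`, the gradient flow solution
`β̂_gf(t) = (XᵀX)⁺(I − exp(−tXᵀX/n))XᵀY` converges to the minimum-norm least-squares
solution `(XᵀX)⁺XᵀY`. -/
theorem gradient_flow_limit {n d : ℕ} (hn : 0 < n)
    (X : Matrix (Fin n) (Fin d) ℝ) (Y : Fin n → ℝ)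
    (P : Matrix (Fin d) (Fin d) ℝ) (hP : IsMoorePenroseInv (Xᵀ * X) P) :
    Tendsto (fun t : ℝ =>
        (P * ((1 : Matrix (Fin d) (Fin d) ℝ) -
          NormedSpace.exp ((-t / (n : ℝ)) • (Xᵀ * X)))) *ᵥ (Xᵀ *ᵥ Y))
      atTop (nhds (P *ᵥ (Xᵀ *ᵥ Y))) := by
  have hrange : (Xᵀ * X) *ᵥ (P *ᵥ (Xᵀ *ᵥ Y)) = Xᵀ *ᵥ Y := by
    rw [mulVec_mulVec, mulVec_mulVec, hP.gram_mul_mul_transpose_eq]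
  have hA : (Xᵀ * X).PosSemidef := by
    simpa only [conjTranspose_eq_transpose_of_trivial] using posSemidef_conjTranspose_mul_self X
  have hdecay : Tendsto (fun t : ℝ => NormedSpace.exp ((-t / (n : ℝ)) • (Xᵀ * X)) * (Xᵀ * X))
      atTop (𝓝 0) := by
    simp_rw [neg_div]
    exact hA.tendsto_exp_neg_smul_mul_atTop.comp
      (tendsto_id.atTop_div_const (by exact_mod_cast hn))
  rw [← hrange]
  exact tendsto_mul_one_sub_mulVec hdecay P _
end

section
/- The gradient flow estimate has norm monotonically non-decreasing in t: t ↦ ‖(XᵀX)⁺(I − exp(−tXᵀX/n))XᵀY‖₂ is non-decreasing on [0, ∞). -/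
open Matrix

noncomputable def euclNorm {d : ℕ} (v : Fin d → ℝ) : ℝ := Real.sqrt (∑ i, (v i) ^ 2)

/-!
Diagonalize `XᵀX = U diag(λ) Uᵀ` with `U` orthogonal and `λ ≥ 0`. The Moore–Penrose inverse is
unique, so `P = U diag(λ⁻¹) Uᵀ` (Lean's `0⁻¹ = 0` is exactly the pseudoinverse convention on a
diagonal), and `P (1 - exp(-t XᵀX / n)) = U diag(λᵢ⁻¹ (1 - e^{-t λᵢ / n})) Uᵀ`. Since `U` is an
isometry, the norm is that of this diagonal matrix applied to `Uᵀ Xᵀ Y`, and every diagonal entry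
is nonnegative and non-decreasing in `t ≥ 0`.
-/

namespace IsMoorePenroseInv

variable {d : ℕ} {A P Q : Matrix (Fin d) (Fin d) ℝ}

theorem unique (hP : IsMoorePenroseInv A P) (hQ : IsMoorePenroseInv A Q) : P = Q := by
  obtain ⟨hP₁, hP₂, hP₃, hP₄⟩ := hP
  obtain ⟨hQ₁, hQ₂, hQ₃, hQ₄⟩ := hQ
  have hAP : A * P = A * Q := by
    calc A * P = (A * Q)ᵀ * (A * P)ᵀ := by
          rw [hQ₃, hP₃, ← mul_assoc, mul_assoc A Q A, ← mul_assoc, hQ₁]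
      _ = (A * P * A * Q)ᵀ := by simp only [transpose_mul, mul_assoc]
      _ = A * Q := by rw [hP₁, hQ₃]
  have hPA : P * A = Q * A := by
    calc P * A = (P * A)ᵀ * (Q * A)ᵀ := by rw [hP₄, hQ₄, mul_assoc, ← mul_assoc A Q A, hQ₁]
      _ = (Q * (A * P * A))ᵀ := by simp only [transpose_mul, mul_assoc]
      _ = Q * A := by rw [hP₁, hQ₄]
  calc P = P * A * P := hP₂.symm
    _ = Q * A * Q := by rw [hPA, mul_assoc, hAP, ← mul_assoc]
    _ = Q := hQ₂

theorem diagonal_inv (a : Fin d → ℝ) : IsMoorePenroseInv (diagonal a) (diagonal a⁻¹) := by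
  have hinv (x : ℝ) : x⁻¹ * x * x⁻¹ = x⁻¹ := by simpa using mul_inv_mul_cancel x⁻¹
  refine ⟨?_, ?_, ?_, ?_⟩ <;>
    simp only [diagonal_mul_diagonal, diagonal_transpose, Pi.inv_def, mul_inv_mul_cancel, hinv]

theorem map {F : Type*} [FunLike F (Matrix (Fin d) (Fin d) ℝ) (Matrix (Fin d) (Fin d) ℝ)]
    [MulHomClass F _ _] [StarHomClass F _ _] (φ : F) (h : IsMoorePenroseInv A P) :
    IsMoorePenroseInv (φ A) (φ P) := by
  obtain ⟨h₁, h₂, h₃, h₄⟩ := h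
  simp only [← conjTranspose_eq_transpose_of_trivial, ← star_eq_conjTranspose] at h₃ h₄
  refine ⟨?_, ?_, ?_, ?_⟩ <;>
    simp only [← conjTranspose_eq_transpose_of_trivial, ← star_eq_conjTranspose, ← map_mul,
      ← map_star, h₁, h₂, h₃, h₄]

end IsMoorePenroseInv

namespace Matrix.IsHermitian

variable {d : ℕ} {A : Matrix (Fin d) (Fin d) ℝ} (hA : A.IsHermitian)

theorem spectral_theorem_real :
    A = Unitary.conjStarAlgAut ℝ _ hA.eigenvectorUnitary (diagonal hA.eigenvalues) := by
  simpa [RCLike.ofReal_real_eq_id] using hA.spectral_theorem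

theorem exp_smul_eq_conjStarAlgAut_diagonal (s : ℝ) :
    NormedSpace.exp (s • A) = Unitary.conjStarAlgAut ℝ _ hA.eigenvectorUnitary
      (diagonal fun i => Real.exp (s * hA.eigenvalues i)) := by
  have hsA : s • A =
      Unitary.conjStarAlgAut ℝ _ hA.eigenvectorUnitary (diagonal (s • hA.eigenvalues)) := by
    conv_lhs => rw [hA.spectral_theorem_real]
    rw [← map_smul, ← diagonal_smul]
  have hconj :=
    exp_units_conj (Unitary.toUnits hA.eigenvectorUnitary) (diagonal (s • hA.eigenvalues))
  simp only [Unitary.val_toUnits_apply, Unitary.val_inv_toUnits_apply, ← Unitary.star_eq_inv,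
    Unitary.coe_star] at hconj
  rw [hsA, Unitary.conjStarAlgAut_apply, Unitary.conjStarAlgAut_apply, hconj, exp_diagonal]
  congr
  ext i
  simp [Real.exp_eq_exp_ℝ]

end Matrix.IsHermitian

section Norm

variable {d : ℕ}

theorem euclNorm_eq_sqrt_dotProduct (v : Fin d → ℝ) : euclNorm v = Real.sqrt (v ⬝ᵥ v) := by
  simp only [euclNorm, dotProduct, sq]

theorem euclNorm_mulVec_of_mem_unitaryGroup {U : Matrix (Fin d) (Fin d) ℝ}
    (hU : U ∈ unitaryGroup (Fin d) ℝ) (v : Fin d → ℝ) : euclNorm (U *ᵥ v) = euclNorm v := by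
  have hUU : Uᵀ * U = 1 := by
    simpa [star_eq_conjTranspose] using (mem_unitaryGroup_iff').mp hU
  rw [euclNorm_eq_sqrt_dotProduct, euclNorm_eq_sqrt_dotProduct, dotProduct_mulVec,
    ← mulVec_transpose, mulVec_mulVec, hUU, one_mulVec]

theorem euclNorm_diagonal_mulVec_le {c c' : Fin d → ℝ} (h : ∀ i, |c i| ≤ |c' i|) (v : Fin d → ℝ) :
    euclNorm (diagonal c *ᵥ v) ≤ euclNorm (diagonal c' *ᵥ v) := by
  refine Real.sqrt_le_sqrt (Finset.sum_le_sum fun i _ => ?_)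
  simp only [mulVec_diagonal, mul_pow]
  exact mul_le_mul_of_nonneg_right (sq_le_sq.mpr (h i)) (sq_nonneg _)

theorem euclNorm_conjStarAlgAut_diagonal_mulVec_le (U : unitary (Matrix (Fin d) (Fin d) ℝ))
    {c c' : Fin d → ℝ} (h : ∀ i, |c i| ≤ |c' i|) (v : Fin d → ℝ) :
    euclNorm (Unitary.conjStarAlgAut ℝ _ U (diagonal c) *ᵥ v) ≤
      euclNorm (Unitary.conjStarAlgAut ℝ _ U (diagonal c') *ᵥ v) := by
  simp only [Unitary.conjStarAlgAut_apply, ← mulVec_mulVec,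
    euclNorm_mulVec_of_mem_unitaryGroup U.2]
  exact euclNorm_diagonal_mulVec_le h _

end Norm

theorem abs_inv_mul_one_sub_exp_neg_mul_le {a t₁ t₂ : ℝ} (ha : 0 ≤ a) (ht₁ : 0 ≤ t₁)
    (ht : t₁ ≤ t₂) :
    |a⁻¹ * (1 - Real.exp (-t₁ * a))| ≤ |a⁻¹ * (1 - Real.exp (-t₂ * a))| := by
  have hexp_le {t : ℝ} (ht : 0 ≤ t) : Real.exp (-t * a) ≤ 1 :=
    Real.exp_le_one_iff.mpr (by nlinarith)
  rw [abs_mul, abs_mul, abs_of_nonneg (sub_nonneg.mpr (hexp_le ht₁)),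
    abs_of_nonneg (sub_nonneg.mpr (hexp_le (ht₁.trans ht)))]
  gcongr

namespace IsMoorePenroseInv

variable {d : ℕ} {A P : Matrix (Fin d) (Fin d) ℝ}

theorem eq_conjStarAlgAut_diagonal_inv (hA : A.IsHermitian) (hP : IsMoorePenroseInv A P) :
    P = Unitary.conjStarAlgAut ℝ _ hA.eigenvectorUnitary (diagonal hA.eigenvalues⁻¹) := by
  have h := (diagonal_inv hA.eigenvalues).map (Unitary.conjStarAlgAut ℝ _ hA.eigenvectorUnitary)
  rw [← hA.spectral_theorem_real] at h
  exact hP.unique h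

theorem mul_one_sub_exp_smul (hA : A.IsHermitian) (hP : IsMoorePenroseInv A P) (s : ℝ) :
    P * (1 - NormedSpace.exp (s • A)) = Unitary.conjStarAlgAut ℝ _ hA.eigenvectorUnitary
      (diagonal fun i => (hA.eigenvalues i)⁻¹ * (1 - Real.exp (s * hA.eigenvalues i))) := by
  rw [hP.eq_conjStarAlgAut_diagonal_inv hA, hA.exp_smul_eq_conjStarAlgAut_diagonal,
    ← map_one (Unitary.conjStarAlgAut ℝ _ hA.eigenvectorUnitary), ← map_sub, ← map_mul,
    ← diagonal_one, diagonal_sub, diagonal_mul_diagonal]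
  rfl

end IsMoorePenroseInv

theorem gradient_flow_norm_monotone_general {n d : ℕ}
    (X : Matrix (Fin n) (Fin d) ℝ) (Y : Fin n → ℝ)
    (P : Matrix (Fin d) (Fin d) ℝ) (hP : IsMoorePenroseInv (Xᵀ * X) P)
    (t₁ t₂ : ℝ) (ht₁ : 0 ≤ t₁) (ht : t₁ ≤ t₂) :
    euclNorm ((P * ((1 : Matrix (Fin d) (Fin d) ℝ) -
        NormedSpace.exp ((-t₁ / (n : ℝ)) • (Xᵀ * X)))) *ᵥ (Xᵀ *ᵥ Y)) ≤
      euclNorm ((P * ((1 : Matrix (Fin d) (Fin d) ℝ) -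
        NormedSpace.exp ((-t₂ / (n : ℝ)) • (Xᵀ * X)))) *ᵥ (Xᵀ *ᵥ Y)) := by
  have hXX : (Xᵀ * X).PosSemidef := by simpa using posSemidef_conjTranspose_mul_self X
  have hn₀ : (0 : ℝ) ≤ n := n.cast_nonneg
  rw [hP.mul_one_sub_exp_smul hXX.isHermitian, hP.mul_one_sub_exp_smul hXX.isHermitian]
  refine euclNorm_conjStarAlgAut_diagonal_mulVec_le _ (fun i => ?_) _
  simp only [neg_div]
  exact abs_inv_mul_one_sub_exp_neg_mul_le (hXX.eigenvalues_nonneg i) (div_nonneg ht₁ hn₀)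
    (div_le_div_of_nonneg_right ht hn₀)

/-- `t ↦ ‖(XᵀX)⁺(I − exp(−tXᵀX/n))XᵀY‖₂` is non-decreasing on `[0, ∞)`. -/
theorem gradient_flow_norm_monotone {n d : ℕ} (hn : 0 < n)
    (X : Matrix (Fin n) (Fin d) ℝ) (Y : Fin n → ℝ)
    (P : Matrix (Fin d) (Fin d) ℝ) (hP : IsMoorePenroseInv (Xᵀ * X) P)
    (t₁ t₂ : ℝ) (ht₁ : 0 ≤ t₁) (ht : t₁ ≤ t₂) :
    euclNorm ((P * ((1 : Matrix (Fin d) (Fin d) ℝ) -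
        NormedSpace.exp ((-t₁ / (n : ℝ)) • (Xᵀ * X)))) *ᵥ (Xᵀ *ᵥ Y)) ≤
      euclNorm ((P * ((1 : Matrix (Fin d) (Fin d) ℝ) -
        NormedSpace.exp ((-t₂ / (n : ℝ)) • (Xᵀ * X)))) *ᵥ (Xᵀ *ᵥ Y)) :=
  gradient_flow_norm_monotone_general X Y P hP t₁ t₂ ht₁ ht
end
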